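/- arXiv:0805.3541 — 7 statements merged into one kernel-verified Lean document; each statement's English description precedes it below -/
import Mathlib

section
/- For any i, i', i'' ∈ I and j, j', j'' ∈ J, the cyclic sum s_×(i',j',i'',j'')s_×(i,j,i'',j'') + s_×(i'',j'',i,j)s_×(i',j',i,j) + s_×(i,j,i',j')s_×(i'',j'',i',j') + s_×(i',j',i'',j'')s_×(i,j,i',j') + s_×(i'',j'',i,j)s_×(i',j',i'',j'') + s_×(i,j,i',j')s_×(i'',j'',i,j) equals 0. -/
/-- The counterclockwise cyclic distance from `a` to `b` among the boundary points
`b_1, …, b_n` (labelled counterclockwise). -/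
def cdist (n a b : ℕ) : ℕ := (b + n - a) % n

/-- `btw n a b c` means `a ≺ b ≺ c`: `b` lies strictly between `a` and `c`
in the counterclockwise cyclic order on `b_1, …, b_n`. -/
def btw (n a b c : ℕ) : Prop := 0 < cdist n a b ∧ cdist n a b < cdist n a c

/-- `ord4 n a b c d` means `a ≺ b ≺ c ≺ d` in the counterclockwise cyclic order. -/
def ord4 (n a b c d : ℕ) : Prop :=
  0 < cdist n a b ∧ cdist n a b < cdist n a c ∧ cdist n a c < cdist n a d

open Classical in
/-- The function `s_=(i,j,i',j')` of the paper. -/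
noncomputable def sEq (n i j i' j' : ℕ) : ℚ :=
  if ord4 n i i' j' j then 1
  else if ord4 n i' i j j' then -1
  else if (i = i' ∧ btw n i j' j) ∨ (j = j' ∧ btw n i i' j) then 1/2
  else if (i = i' ∧ btw n i j j') ∨ (j = j' ∧ btw n i' i j) then -1/2
  else 0

open Classical in
/-- The function `s_×(i,j,i',j')` of the paper. -/
noncomputable def sCross (n i j i' j' : ℕ) : ℚ :=
  if ord4 n i' i j' j then 1
  else if ord4 n i i' j j' then -1
  else if (i = i' ∧ btw n i j' j) ∨ (j = j' ∧ btw n i' i j) then 1/2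
  else if (i = i' ∧ btw n i j j') ∨ (j = j' ∧ btw n i i' j) then -1/2
  else 0

lemma cdist_eq_aux (n a b : ℕ) (ha : 1 ≤ a) (ha' : a ≤ n) (hb : 1 ≤ b) (hb' : b ≤ n) :
    cdist n a b = if a ≤ b then b - a else b + n - a := by
  unfold cdist
  rcases Nat.lt_or_ge (b + n - a) n with h1 | h1
  · rw [Nat.mod_eq_of_lt h1]; split <;> omega
  · rw [Nat.mod_eq_sub_mod h1, Nat.mod_eq_of_lt (by omega)]; split <;> omega

set_option maxHeartbeats 4000000 in
lemma sCross_antisymm_aux (n i j i' j' : ℕ) (h1 : 1 ≤ i) (h2 : i ≤ n) (h3 : 1 ≤ j) (h4 : j ≤ n)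
    (h5 : 1 ≤ i') (h6 : i' ≤ n) (h7 : 1 ≤ j') (h8 : j' ≤ n) :
    sCross n i j i' j' = - sCross n i' j' i j := by
  unfold sCross ord4 _root_.btw
  rw [cdist_eq_aux n i' i h5 h6 h1 h2, cdist_eq_aux n i' j' h5 h6 h7 h8,
    cdist_eq_aux n i' j h5 h6 h3 h4, cdist_eq_aux n i i' h1 h2 h5 h6,
    cdist_eq_aux n i j h1 h2 h3 h4, cdist_eq_aux n i j' h1 h2 h7 h8]
  split_ifs <;> norm_num <;> omega

/-- The cyclic sum of products of `s_×` values over three source-sink pairs vanishes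
(first identity in (3.10) of the paper). -/
theorem sCross_cyclic_sum (n : ℕ) (I J : Finset ℕ)
    (hdisj : Disjoint I J) (hunion : I ∪ J = Finset.Icc 1 n)
    (i i' i'' : ℕ) (hi : i ∈ I) (hi' : i' ∈ I) (hi'' : i'' ∈ I)
    (j j' j'' : ℕ) (hj : j ∈ J) (hj' : j' ∈ J) (hj'' : j'' ∈ J) :
    sCross n i' j' i'' j'' * sCross n i j i'' j'' +
    sCross n i'' j'' i j * sCross n i' j' i j +
    sCross n i j i' j' * sCross n i'' j'' i' j' +
    sCross n i' j' i'' j'' * sCross n i j i' j' +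
    sCross n i'' j'' i j * sCross n i' j' i'' j'' +
    sCross n i j i' j' * sCross n i'' j'' i j = 0 := by
  have mem : ∀ x ∈ I ∪ J, 1 ≤ x ∧ x ≤ n := by
    intro x hx
    rw [hunion, Finset.mem_Icc] at hx
    exact hx
  obtain ⟨hi1, hi2⟩ := mem i (Finset.mem_union_left _ hi)
  obtain ⟨hi'1, hi'2⟩ := mem i' (Finset.mem_union_left _ hi')
  obtain ⟨hi''1, hi''2⟩ := mem i'' (Finset.mem_union_left _ hi'')
  obtain ⟨hj1, hj2⟩ := mem j (Finset.mem_union_right _ hj)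
  obtain ⟨hj'1, hj'2⟩ := mem j' (Finset.mem_union_right _ hj')
  obtain ⟨hj''1, hj''2⟩ := mem j'' (Finset.mem_union_right _ hj'')
  rw [sCross_antisymm_aux n i j i'' j'' hi1 hi2 hj1 hj2 hi''1 hi''2 hj''1 hj''2,
    sCross_antisymm_aux n i' j' i j hi'1 hi'2 hj'1 hj'2 hi1 hi2 hj1 hj2,
    sCross_antisymm_aux n i'' j'' i' j' hi''1 hi''2 hj''1 hj''2 hi'1 hi'2 hj'1 hj'2]
  ring
end

section
/- For any i, i', i'' ∈ I and j, j', j'' ∈ J (with not all of i,i',i'' equal, not all of j,j',j'' equal, and no two of the pairs (i,j),(i',j'),(i'',j'') equal), the identity s_=(i',j',i'',j'')s_=(i,j,i'',j') + s_=(i'',j'',i,j)s_=(i',j',i,j'') + s_=(i,j,i',j')s_=(i'',j'',i',j) = 0 holds. -/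
/-!
`s_=(i,j,i',j')` only depends on the cyclic order type of its four arguments, and this order
type is preserved by order embeddings of linear orders. Hence the identity is a statement about
the cyclic order type of at most six points; each such type is realised by six points of
`Fin 6`, where the identity is checked exhaustively.
-/

section CyclicOrder

attribute [local instance] LT.toSBtw

variable {α β : Type*} [LinearOrder α] [LinearOrder β]

instance decidableSbtw (a b c : α) : Decidable (sbtw a b c) :=
  inferInstanceAs (Decidable (a < b ∧ b < c ∨ b < c ∧ c < a ∨ c < a ∧ a < b))

/-- Twice `s_=(i,j,i',j')`, for a linear order closed up into a circle; doubled so that the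
exhaustive check on `Fin 6` runs over `ℤ` rather than `ℚ`. -/
def sEqTwice (i j i' j' : α) : ℤ :=
  if sbtw i i' j' ∧ sbtw i j' j then 2
  else if sbtw i' i j ∧ sbtw i' j j' then -2
  else if (i = i' ∧ sbtw i j' j) ∨ (j = j' ∧ sbtw i i' j) then 1
  else if (i = i' ∧ sbtw i j j') ∨ (j = j' ∧ sbtw i' i j) then -1
  else 0

def threeTerm (i i' i'' j j' j'' : α) : ℤ :=
  sEqTwice i' j' i'' j'' * sEqTwice i j i'' j' + sEqTwice i'' j'' i j * sEqTwice i' j' i j'' +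
    sEqTwice i j i' j' * sEqTwice i'' j'' i' j

theorem sbtw_map (f : α ↪o β) (a b c : α) : sbtw (f a) (f b) (f c) ↔ sbtw a b c := by
  simp only [sbtw_iff, f.lt_iff_lt]

theorem sEqTwice_map (f : α ↪o β) (i j i' j' : α) :
    sEqTwice (f i) (f j) (f i') (f j') = sEqTwice i j i' j' := by
  simp only [sEqTwice, sbtw_map, f.eq_iff_eq]

theorem threeTerm_map (f : α ↪o β) (i i' i'' j j' j'' : α) :
    threeTerm (f i) (f i') (f i'') (f j) (f j') (f j'') = threeTerm i i' i'' j j' j'' := by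
  simp only [threeTerm, sEqTwice_map]

theorem threeTerm_fin_six : ∀ i i' i'' j j' j'' : Fin 6, ¬ (i = i' ∧ i = i'') →
    ¬ (j = j' ∧ j = j'') → threeTerm i i' i'' j j' j'' = 0 := by
  decide +kernel

theorem threeTerm_eq_zero {i i' i'' j j' j'' : α} (hI : ¬ (i = i' ∧ i = i''))
    (hJ : ¬ (j = j' ∧ j = j'')) : threeTerm i i' i'' j j' j'' = 0 := by
  classical
  set S : Finset α := {i, i', i'', j, j', j''} with hS
  have hcard : S.card ≤ 6 := Finset.card_le_six
  have hrange : ∀ x ∈ S, x ∈ Set.range (S.orderEmbOfFin rfl) := by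
    simp only [Finset.range_orderEmbOfFin, Finset.mem_coe, imp_self, implies_true]
  have hmem : i ∈ S ∧ i' ∈ S ∧ i'' ∈ S ∧ j ∈ S ∧ j' ∈ S ∧ j'' ∈ S := by
    simp [hS]
  clear_value S
  obtain ⟨hi, hi', hi'', hj, hj', hj''⟩ := hmem
  obtain ⟨a, rfl⟩ := hrange i hi
  obtain ⟨a', rfl⟩ := hrange i' hi'
  obtain ⟨a'', rfl⟩ := hrange i'' hi''
  obtain ⟨b, rfl⟩ := hrange j hj
  obtain ⟨b', rfl⟩ := hrange j' hj'
  obtain ⟨b'', rfl⟩ := hrange j'' hj''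
  rw [threeTerm_map, ← threeTerm_map (Fin.castLEOrderEmb hcard)]
  exact threeTerm_fin_six _ _ _ _ _ _ (by simpa using hI) (by simpa using hJ)

theorem ord4_iff_btw_and_btw {n a b c d : ℕ} :
    ord4 n a b c d ↔ _root_.btw n a b c ∧ _root_.btw n a c d := by
  unfold ord4 _root_.btw
  omega

theorem cdist_eq_ite {n a b : ℕ} (ha : a ∈ Finset.Icc 1 n) (hb : b ∈ Finset.Icc 1 n) :
    cdist n a b = if a ≤ b then b - a else b + n - a := by
  rw [Finset.mem_Icc] at ha hb
  unfold cdist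
  split_ifs with hab
  · rw [Nat.mod_eq_sub_mod (by omega), Nat.mod_eq_of_lt (by omega)]
    omega
  · exact Nat.mod_eq_of_lt (by omega)

theorem btw_iff_sbtw {n a b c : ℕ} (ha : a ∈ Finset.Icc 1 n) (hb : b ∈ Finset.Icc 1 n)
    (hc : c ∈ Finset.Icc 1 n) : _root_.btw n a b c ↔ sbtw a b c := by
  rw [_root_.btw, sbtw_iff, cdist_eq_ite ha hb, cdist_eq_ite ha hc]
  rw [Finset.mem_Icc] at ha hb hc
  split_ifs <;> omega

theorem sEq_eq_sEqTwice_div_two {n a b c d : ℕ} (ha : a ∈ Finset.Icc 1 n)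
    (hb : b ∈ Finset.Icc 1 n) (hc : c ∈ Finset.Icc 1 n) (hd : d ∈ Finset.Icc 1 n) :
    sEq n a b c d = sEqTwice a b c d / 2 := by
  simp only [sEq, sEqTwice, ord4_iff_btw_and_btw, btw_iff_sbtw, ha, hb, hc, hd]
  split_ifs <;> norm_num

end CyclicOrder

theorem sEq_threeterm_identity_general (n : ℕ) (I J : Finset ℕ)
    (hunion : I ∪ J = Finset.Icc 1 n)
    (i i' i'' : ℕ) (hi : i ∈ I) (hi' : i' ∈ I) (hi'' : i'' ∈ I)
    (j j' j'' : ℕ) (hj : j ∈ J) (hj' : j' ∈ J) (hj'' : j'' ∈ J)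
    (hnotI : ¬ (i = i' ∧ i = i''))
    (hnotJ : ¬ (j = j' ∧ j = j'')) :
    sEq n i' j' i'' j'' * sEq n i j i'' j' +
    sEq n i'' j'' i j * sEq n i' j' i j'' +
    sEq n i j i' j' * sEq n i'' j'' i' j = 0 := by
  have hImem : ∀ x ∈ I, x ∈ Finset.Icc 1 n := fun x hx =>
    hunion ▸ Finset.mem_union_left J hx
  have hJmem : ∀ x ∈ J, x ∈ Finset.Icc 1 n := fun x hx =>
    hunion ▸ Finset.mem_union_right I hx
  have hzero : (threeTerm i i' i'' j j' j'' : ℚ) = 0 := by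
    exact_mod_cast threeTerm_eq_zero hnotI hnotJ
  simp only [threeTerm, Int.cast_add, Int.cast_mul] at hzero
  simp only [sEq_eq_sEqTwice_div_two, hImem, hJmem, hi, hi', hi'', hj, hj', hj'']
  linear_combination hzero / 4

/-- The second identity in (3.10) of the paper: for sources `i, i', i''` and sinks
`j, j', j''` with not all sources equal, not all sinks equal, and no two of the
pairs `(i,j)`, `(i',j')`, `(i'',j'')` equal,
`s_=(i',j',i'',j'')s_=(i,j,i'',j') + s_=(i'',j'',i,j)s_=(i',j',i,j'')
 + s_=(i,j,i',j')s_=(i'',j'',i',j) = 0`. -/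
theorem sEq_threeterm_identity (n : ℕ) (I J : Finset ℕ)
    (hdisj : Disjoint I J) (hunion : I ∪ J = Finset.Icc 1 n)
    (i i' i'' : ℕ) (hi : i ∈ I) (hi' : i' ∈ I) (hi'' : i'' ∈ I)
    (j j' j'' : ℕ) (hj : j ∈ J) (hj' : j' ∈ J) (hj'' : j'' ∈ J)
    (hnotI : ¬ (i = i' ∧ i = i''))
    (hnotJ : ¬ (j = j' ∧ j = j''))
    (hp1 : ¬ (i = i' ∧ j = j'))
    (hp2 : ¬ (i = i'' ∧ j = j''))
    (hp3 : ¬ (i' = i'' ∧ j' = j'')) :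
    sEq n i' j' i'' j'' * sEq n i j i'' j' +
    sEq n i'' j'' i j * sEq n i' j' i j'' +
    sEq n i j i' j' * sEq n i'' j'' i' j = 0 :=
  sEq_threeterm_identity_general n I J hunion i i' i'' hi hi' hi'' j j' j'' hj hj' hj'' hnotI hnotJ
end

section
/- For any i, i', i'' ∈ I and j, j', j'' ∈ J, one has s_=(i',j',i'',j'') · (s_×(i,j,i'',j') + s_×(i,j,i',j'') - s_×(i,j,i'',j'') - s_×(i,j,i',j')) = 0. -/
/- ### Auxiliary lemmas -/

lemma cdist_formula {n y z : ℕ} (hn : 0 < n) (hy1 : 1 ≤ y) (hy2 : y ≤ n)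
    (hz1 : 1 ≤ z) (hz2 : z ≤ n) :
    cdist n y z = if y ≤ z then z - y else z + n - y := by
  unfold cdist
  split_ifs with h
  · have h1 : z + n - y = (z - y) + n := by omega
    rw [h1, Nat.add_mod_right, Nat.mod_eq_of_lt (by omega)]
  · exact Nat.mod_eq_of_lt (by omega)

lemma cdist_lt_n {n y z : ℕ} (hn : 0 < n) : cdist n y z < n := Nat.mod_lt _ hn

lemma cdist_eq_zero_iff {n y z : ℕ} (hn : 0 < n) (hy1 : 1 ≤ y) (hy2 : y ≤ n)
    (hz1 : 1 ≤ z) (hz2 : z ≤ n) : cdist n y z = 0 ↔ y = z := by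
  rw [cdist_formula hn hy1 hy2 hz1 hz2]
  split_ifs <;> omega

lemma cdist_inj_iff {n i a b : ℕ} (hn : 0 < n) (hi1 : 1 ≤ i) (hi2 : i ≤ n)
    (ha1 : 1 ≤ a) (ha2 : a ≤ n) (hb1 : 1 ≤ b) (hb2 : b ≤ n) :
    cdist n i a = cdist n i b ↔ a = b := by
  rw [cdist_formula hn hi1 hi2 ha1 ha2, cdist_formula hn hi1 hi2 hb1 hb2]
  split_ifs <;> omega

lemma ord4_rot {n a i b j : ℕ} (hn : 0 < n) (ha1 : 1 ≤ a) (ha2 : a ≤ n)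
    (hi1 : 1 ≤ i) (hi2 : i ≤ n) (hb1 : 1 ≤ b) (hb2 : b ≤ n)
    (hj1 : 1 ≤ j) (hj2 : j ≤ n) :
    ord4 n a i b j ↔
      0 < cdist n i b ∧ cdist n i b < cdist n i j ∧ cdist n i j < cdist n i a := by
  unfold ord4
  rw [cdist_formula hn ha1 ha2 hi1 hi2, cdist_formula hn ha1 ha2 hb1 hb2,
      cdist_formula hn ha1 ha2 hj1 hj2, cdist_formula hn hi1 hi2 hb1 hb2,
      cdist_formula hn hi1 hi2 hj1 hj2, cdist_formula hn hi1 hi2 ha1 ha2]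
  split_ifs <;> omega

lemma btw_rot {n a i j : ℕ} (hn : 0 < n) (ha1 : 1 ≤ a) (ha2 : a ≤ n)
    (hi1 : 1 ≤ i) (hi2 : i ≤ n) (hj1 : 1 ≤ j) (hj2 : j ≤ n) :
    btw n a i j ↔ 0 < cdist n i j ∧ cdist n i j < cdist n i a := by
  unfold _root_.btw
  rw [cdist_formula hn ha1 ha2 hi1 hi2, cdist_formula hn ha1 ha2 hj1 hj2,
      cdist_formula hn hi1 hi2 hj1 hj2, cdist_formula hn hi1 hi2 ha1 ha2]
  split_ifs <;> omega

/-- The "potential" function: `sCross n i j a b = uFn n i j a - uFn n i j b`. -/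
noncomputable def uFn (n i j x : ℕ) : ℚ :=
  if x = i then 1/2 else if x = j then 1/2
  else if cdist n i j < cdist n i x then 1 else 0

set_option maxHeartbeats 1000000 in
lemma sCross_split {n i j a b : ℕ} (hn : 0 < n)
    (hi1 : 1 ≤ i) (hi2 : i ≤ n) (hj1 : 1 ≤ j) (hj2 : j ≤ n)
    (ha1 : 1 ≤ a) (ha2 : a ≤ n) (hb1 : 1 ≤ b) (hb2 : b ≤ n)
    (hij : i ≠ j) (haj : a ≠ j) (hbi : b ≠ i) :
    sCross n i j a b = uFn n i j a - uFn n i j b := by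
  have e1 : (i = a) ↔ cdist n i a = 0 := by
    rw [cdist_eq_zero_iff hn hi1 hi2 ha1 ha2]
  have e1' : (a = i) ↔ cdist n i a = 0 := by rw [e1.symm]; exact eq_comm
  have e2 : (j = b) ↔ cdist n i b = cdist n i j := by
    rw [cdist_inj_iff hn hi1 hi2 hb1 hb2 hj1 hj2]; exact eq_comm
  have e2' : (b = j) ↔ cdist n i b = cdist n i j := by
    rw [cdist_inj_iff hn hi1 hi2 hb1 hb2 hj1 hj2]
  have hJ0 : 0 < cdist n i j := by
    rcases Nat.eq_zero_or_pos (cdist n i j) with h | h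
    · exact absurd ((cdist_eq_zero_iff hn hi1 hi2 hj1 hj2).mp h) hij
    · exact h
  have hB0 : 0 < cdist n i b := by
    rcases Nat.eq_zero_or_pos (cdist n i b) with h | h
    · exact absurd ((cdist_eq_zero_iff hn hi1 hi2 hb1 hb2).mp h).symm hbi
    · exact h
  have hAJ : cdist n i a ≠ cdist n i j := fun h =>
    haj ((cdist_inj_iff hn hi1 hi2 ha1 ha2 hj1 hj2).mp h)
  have hAn : cdist n i a < n := cdist_lt_n hn
  have hBn : cdist n i b < n := cdist_lt_n hn
  have hJn : cdist n i j < n := cdist_lt_n hn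
  unfold sCross uFn
  rw [ord4_rot hn ha1 ha2 hi1 hi2 hb1 hb2 hj1 hj2,
      btw_rot hn ha1 ha2 hi1 hi2 hj1 hj2]
  simp only [ord4, _root_.btw, e1, e1', e2, e2', haj, hbi, if_false]
  split_ifs <;> first | omega | norm_num

/-- The third identity in (3.10) of the paper:
`s_=(i',j',i'',j'') · (s_×(i,j,i'',j') + s_×(i,j,i',j'') − s_×(i,j,i'',j'')
 − s_×(i,j,i',j')) = 0`. -/
theorem sEq_sCross_mixed_identity (n : ℕ) (I J : Finset ℕ)
    (hdisj : Disjoint I J) (hunion : I ∪ J = Finset.Icc 1 n)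
    (i i' i'' : ℕ) (hi : i ∈ I) (hi' : i' ∈ I) (hi'' : i'' ∈ I)
    (j j' j'' : ℕ) (hj : j ∈ J) (hj' : j' ∈ J) (hj'' : j'' ∈ J) :
    sEq n i' j' i'' j'' *
      (sCross n i j i'' j' + sCross n i j i' j'' -
       sCross n i j i'' j'' - sCross n i j i' j') = 0 := by
  have hmem : ∀ x ∈ I, 1 ≤ x ∧ x ≤ n := by
    intro x hx
    have : x ∈ Finset.Icc 1 n := hunion ▸ Finset.mem_union_left J hx
    exact Finset.mem_Icc.mp this
  have hmemJ : ∀ x ∈ J, 1 ≤ x ∧ x ≤ n := by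
    intro x hx
    have : x ∈ Finset.Icc 1 n := hunion ▸ Finset.mem_union_right I hx
    exact Finset.mem_Icc.mp this
  obtain ⟨hi1, hi2⟩ := hmem i hi
  obtain ⟨hi'1, hi'2⟩ := hmem i' hi'
  obtain ⟨hi''1, hi''2⟩ := hmem i'' hi''
  obtain ⟨hj1, hj2⟩ := hmemJ j hj
  obtain ⟨hj'1, hj'2⟩ := hmemJ j' hj'
  obtain ⟨hj''1, hj''2⟩ := hmemJ j'' hj''
  have hn : 0 < n := by omega
  have hIJ : ∀ x ∈ I, ∀ y ∈ J, x ≠ y := by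
    intro x hx y hy hxy
    exact Finset.disjoint_left.mp hdisj hx (hxy ▸ hy)
  have hij : i ≠ j := hIJ i hi j hj
  rw [sCross_split hn hi1 hi2 hj1 hj2 hi''1 hi''2 hj'1 hj'2 hij
        (hIJ i'' hi'' j hj) (fun h => hIJ i hi j' hj' h.symm),
      sCross_split hn hi1 hi2 hj1 hj2 hi'1 hi'2 hj''1 hj''2 hij
        (hIJ i' hi' j hj) (fun h => hIJ i hi j'' hj'' h.symm),
      sCross_split hn hi1 hi2 hj1 hj2 hi''1 hi''2 hj''1 hj''2 hij
        (hIJ i'' hi'' j hj) (fun h => hIJ i hi j'' hj'' h.symm),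
      sCross_split hn hi1 hi2 hj1 hj2 hi'1 hi'2 hj'1 hj'2 hij
        (hIJ i' hi' j hj) (fun h => hIJ i hi j' hj' h.symm)]
  ring
end

section
/- Let S be the linear operator on diagonal n×n matrices defined by S(e_{jj}) = Σ_{i=1}^n sign(j−i) e_{ii}, and let π_0 be the projection of a matrix onto its diagonal part. Then for any scalars c_1, c_2 the operator R = c_1 R_0 + c_2 S π_0 (with R_0(ξ) = ξ_+ − ξ_−) is skew-symmetric with respect to the trace form, and when c_1 = 1 it satisfies the modified classical Yang–Baxter equation [R(ξ), R(η)] − R([R(ξ), η] + [ξ, R(η)]) = −c_1² [ξ, η]. -/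
/-- The standard R-matrix `R_0(ξ) = ξ_+ − ξ_−` on `n×n` matrices. -/
def R0 (n : ℕ) (ξ : Matrix (Fin n) (Fin n) ℝ) : Matrix (Fin n) (Fin n) ℝ :=
  Matrix.of fun i j => if i < j then ξ i j else if j < i then - ξ i j else 0

/-- `S π_0` : the composition of the projection onto the diagonal part with the operator
`S(e_{jj}) = Σ_i sign(j−i) e_{ii}` on diagonal matrices. -/
def SPi (n : ℕ) (ξ : Matrix (Fin n) (Fin n) ℝ) : Matrix (Fin n) (Fin n) ℝ :=
  Matrix.of fun i j =>
    if i = j then ∑ l : Fin n, ((Int.sign ((l : ℕ) - (i : ℕ) : ℤ)) : ℝ) * ξ l l else 0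

/-- `R = c_1 R_0 + c_2 S π_0`. -/
def Rmat (n : ℕ) (c₁ c₂ : ℝ) (ξ : Matrix (Fin n) (Fin n) ℝ) : Matrix (Fin n) (Fin n) ℝ :=
  c₁ • R0 n ξ + c₂ • SPi n ξ

def fco {n : ℕ} (i j : Fin n) : ℝ := if i < j then 1 else if j < i then -1 else 0

lemma fco_lt {n : ℕ} {i j : Fin n} (h : i < j) : fco i j = 1 := by simp [fco, h]
lemma fco_gt {n : ℕ} {i j : Fin n} (h : j < i) : fco i j = -1 := by
  simp [fco, h, asymm h]
lemma fco_eq {n : ℕ} {i j : Fin n} (h : i = j) : fco i j = 0 := by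
  subst h; simp [fco]

lemma R0_apply (n : ℕ) (ξ : Matrix (Fin n) (Fin n) ℝ) (i j : Fin n) :
    R0 n ξ i j = fco i j * ξ i j := by
  rcases lt_trichotomy i j with h | h | h
  · simp [R0, fco_lt h, h]
  · subst h; simp [R0, fco_eq rfl]
  · simp [R0, fco_gt h, asymm h, h]

lemma sign_cast {n : ℕ} (i l : Fin n) :
    ((Int.sign ((l : ℕ) - (i : ℕ) : ℤ)) : ℝ) = fco i l := by
  rcases lt_trichotomy i l with h | h | h
  · have h' : (i:ℕ) < (l:ℕ) := h
    rw [fco_lt h, Int.sign_eq_one_of_pos (by omega)]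
    norm_num
  · subst h; rw [fco_eq rfl]; simp
  · have h' : (l:ℕ) < (i:ℕ) := h
    rw [fco_gt h, Int.sign_eq_neg_one_of_neg (by omega)]
    norm_num

lemma SPi_eq (n : ℕ) (ξ : Matrix (Fin n) (Fin n) ℝ) :
    SPi n ξ = Matrix.diagonal (fun i => ∑ l : Fin n, fco i l * ξ l l) := by
  ext i j
  simp only [SPi, Matrix.of_apply, Matrix.diagonal]
  by_cases h : i = j
  · subst h; simp [sign_cast]
  · simp [h, Ne.symm h, Matrix.of_apply]

lemma R0_add (n : ℕ) (ξ η : Matrix (Fin n) (Fin n) ℝ) :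
    R0 n (ξ + η) = R0 n ξ + R0 n η := by
  ext i j; simp [R0_apply]; ring

lemma R0_sub (n : ℕ) (ξ η : Matrix (Fin n) (Fin n) ℝ) :
    R0 n (ξ - η) = R0 n ξ - R0 n η := by
  ext i j; simp [R0_apply]; ring

lemma R0_smul (n : ℕ) (c : ℝ) (ξ : Matrix (Fin n) (Fin n) ℝ) :
    R0 n (c • ξ) = c • R0 n ξ := by
  ext i j; simp [R0_apply]; ring

lemma SPi_add (n : ℕ) (ξ η : Matrix (Fin n) (Fin n) ℝ) :
    SPi n (ξ + η) = SPi n ξ + SPi n η := by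
  ext i j
  by_cases h : i = j <;>
    simp [SPi_eq, Matrix.diagonal, h, mul_add, Finset.sum_add_distrib]

lemma SPi_smul (n : ℕ) (c : ℝ) (ξ : Matrix (Fin n) (Fin n) ℝ) :
    SPi n (c • ξ) = c • SPi n ξ := by
  ext i j
  by_cases h : i = j <;>
    simp [SPi_eq, Matrix.diagonal, h, Finset.mul_sum]
  ring_nf
  exact Finset.sum_congr rfl fun l _ => by ring

lemma SPi_eq_zero_of_diag (n : ℕ) (M : Matrix (Fin n) (Fin n) ℝ)
    (h : ∀ l, M l l = 0) : SPi n M = 0 := by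
  ext i j
  by_cases hij : i = j <;> simp [SPi_eq, Matrix.diagonal, hij, h]

lemma fco_pt {n : ℕ} (i k j : Fin n) (ξ η : Matrix (Fin n) (Fin n) ℝ) :
    fco i k * ξ i k * (fco k j * η k j) - fco i k * η i k * (fco k j * ξ k j)
      - fco i j * ((fco i k * ξ i k * η k j - η i k * (fco k j * ξ k j))
        + (ξ i k * (fco k j * η k j) - fco i k * η i k * ξ k j))
      = -(ξ i k * η k j - η i k * ξ k j) := by
  rcases lt_trichotomy i k with h1 | h1 | h1 <;>
    rcases lt_trichotomy k j with h2 | h2 | h2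
  · rw [fco_lt h1, fco_lt h2, fco_lt (lt_trans h1 h2)]; ring
  · subst h2; rw [fco_lt h1, fco_eq rfl]; ring
  · rw [fco_lt h1, fco_gt h2]; ring
  · subst h1; rw [fco_eq rfl, fco_lt h2]; ring
  · subst h1; subst h2; rw [fco_eq rfl]; ring
  · subst h1; rw [fco_eq rfl, fco_gt h2]; ring
  · rw [fco_gt h1, fco_lt h2]; ring
  · subst h2; rw [fco_gt h1, fco_eq rfl]; ring
  · rw [fco_gt h1, fco_gt h2, fco_gt (lt_trans h2 h1)]; ring

lemma R0_mcybe (n : ℕ) (ξ η : Matrix (Fin n) (Fin n) ℝ) :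
    R0 n ξ * R0 n η - R0 n η * R0 n ξ
      - R0 n ((R0 n ξ * η - η * R0 n ξ) + (ξ * R0 n η - R0 n η * ξ))
      = -(ξ * η - η * ξ) := by
  ext i j
  simp only [Matrix.sub_apply, Matrix.add_apply, Matrix.neg_apply, Matrix.mul_apply,
    R0_apply, Finset.mul_sum, ← Finset.sum_sub_distrib, ← Finset.sum_add_distrib,
    ← Finset.sum_neg_distrib]
  refine Finset.sum_congr rfl fun k _ => ?_
  have := fco_pt i k j ξ η
  ring_nf at this ⊢
  linarith [this]

lemma fco_antisymm {n : ℕ} (i j : Fin n) : fco j i = -fco i j := by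
  rcases lt_trichotomy i j with h | h | h
  · rw [fco_lt h, fco_gt h]
  · subst h; rw [fco_eq rfl]; norm_num
  · rw [fco_lt h, fco_gt h]; norm_num

lemma skew0 (n : ℕ) (ξ η : Matrix (Fin n) (Fin n) ℝ) :
    Matrix.trace (R0 n ξ * η) = - Matrix.trace (ξ * R0 n η) := by
  simp only [Matrix.trace, Matrix.diag, Matrix.mul_apply, R0_apply,
    ← Finset.sum_neg_distrib]
  refine Finset.sum_congr rfl fun i _ => Finset.sum_congr rfl fun k _ => ?_
  rw [fco_antisymm k i]; ring

lemma skewS (n : ℕ) (ξ η : Matrix (Fin n) (Fin n) ℝ) :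
    Matrix.trace (SPi n ξ * η) = - Matrix.trace (ξ * SPi n η) := by
  simp only [SPi_eq, Matrix.trace, Matrix.diag, Matrix.mul_apply,
    Matrix.diagonal, Matrix.of_apply]
  simp only [ite_mul, mul_ite, zero_mul, mul_zero, Finset.sum_ite_eq,
    Finset.sum_ite_eq', Finset.mem_univ, if_true, ← Finset.sum_neg_distrib,
    Finset.sum_mul, Finset.mul_sum]
  rw [Finset.sum_comm]
  refine Finset.sum_congr rfl fun i _ => Finset.sum_congr rfl fun l _ => ?_
  rw [fco_antisymm i l]; ring

lemma diag1 (n : ℕ) (ξ η : Matrix (Fin n) (Fin n) ℝ) (l : Fin n) :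
    ((R0 n ξ * η - η * R0 n ξ) + (ξ * R0 n η - R0 n η * ξ)) l l = 0 := by
  simp only [Matrix.add_apply, Matrix.sub_apply, Matrix.mul_apply, R0_apply,
    ← Finset.sum_sub_distrib, ← Finset.sum_add_distrib]
  refine Finset.sum_eq_zero fun k _ => ?_
  rw [fco_antisymm l k]; ring

lemma diag2 (n : ℕ) (ξ η : Matrix (Fin n) (Fin n) ℝ) (l : Fin n) :
    ((SPi n ξ * η - η * SPi n ξ) + (ξ * SPi n η - SPi n η * ξ)) l l = 0 := by
  simp only [SPi_eq, Matrix.add_apply, Matrix.sub_apply, Matrix.diagonal_mul,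
    Matrix.mul_diagonal]
  ring

lemma r0_spi_comm1 (n : ℕ) (ξ η : Matrix (Fin n) (Fin n) ℝ) :
    R0 n (SPi n ξ * η - η * SPi n ξ) = SPi n ξ * R0 n η - R0 n η * SPi n ξ := by
  ext i j
  simp only [SPi_eq, Matrix.sub_apply, R0_apply, Matrix.diagonal_mul, Matrix.mul_diagonal]
  ring

lemma r0_spi_comm2 (n : ℕ) (ξ η : Matrix (Fin n) (Fin n) ℝ) :
    R0 n (ξ * SPi n η - SPi n η * ξ) = R0 n ξ * SPi n η - SPi n η * R0 n ξ := by
  ext i j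
  simp only [SPi_eq, Matrix.sub_apply, R0_apply, Matrix.diagonal_mul, Matrix.mul_diagonal]
  ring

lemma spi_spi_comm (n : ℕ) (ξ η : Matrix (Fin n) (Fin n) ℝ) :
    SPi n ξ * SPi n η = SPi n η * SPi n ξ := by
  rw [SPi_eq, SPi_eq, Matrix.diagonal_mul_diagonal, Matrix.diagonal_mul_diagonal]
  apply congrArg; funext i; ring

/-- For any scalars `c_1, c_2`, the operator `R = c_1 R_0 + c_2 S π_0` is skew-symmetric
with respect to the trace form, and when `c_1 = 1` it satisfies the modified classical
Yang–Baxter equation `[R(ξ), R(η)] − R([R(ξ), η] + [ξ, R(η)]) = −c_1² [ξ, η]`. -/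
theorem Rmat_skew_and_MCYBE (n : ℕ) (c₁ c₂ : ℝ) :
    (∀ ξ η : Matrix (Fin n) (Fin n) ℝ,
      Matrix.trace (Rmat n c₁ c₂ ξ * η) = - Matrix.trace (ξ * Rmat n c₁ c₂ η)) ∧
    (c₁ = 1 → ∀ ξ η : Matrix (Fin n) (Fin n) ℝ,
      (Rmat n c₁ c₂ ξ * Rmat n c₁ c₂ η - Rmat n c₁ c₂ η * Rmat n c₁ c₂ ξ) -
        Rmat n c₁ c₂ ((Rmat n c₁ c₂ ξ * η - η * Rmat n c₁ c₂ ξ) +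
          (ξ * Rmat n c₁ c₂ η - Rmat n c₁ c₂ η * ξ)) =
        -(c₁ ^ 2) • (ξ * η - η * ξ)) := by
  constructor
  · intro ξ η
    simp only [Rmat, add_mul, mul_add, smul_mul_assoc, mul_smul_comm,
      Matrix.trace_add, Matrix.trace_smul, smul_eq_mul]
    linear_combination c₁ * skew0 n ξ η + c₂ * skewS n ξ η
  · intro hc ξ η
    subst hc
    have hR : ∀ ζ : Matrix (Fin n) (Fin n) ℝ,
        Rmat n 1 c₂ ζ = R0 n ζ + c₂ • SPi n ζ := fun ζ => by
      simp [Rmat]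
    set C1 : Matrix (Fin n) (Fin n) ℝ :=
      (R0 n ξ * η - η * R0 n ξ) + (ξ * R0 n η - R0 n η * ξ) with hC1
    set C2 : Matrix (Fin n) (Fin n) ℝ :=
      (SPi n ξ * η - η * SPi n ξ) + (ξ * SPi n η - SPi n η * ξ) with hC2
    have hC : (Rmat n 1 c₂ ξ * η - η * Rmat n 1 c₂ ξ)
        + (ξ * Rmat n 1 c₂ η - Rmat n 1 c₂ η * ξ) = C1 + c₂ • C2 := by
      simp only [hR, hC1, hC2, add_mul, mul_add, smul_mul_assoc, mul_smul_comm]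
      module
    rw [hC]
    have hRC : Rmat n 1 c₂ (C1 + c₂ • C2)
        = R0 n C1 + c₂ • ((SPi n ξ * R0 n η - R0 n η * SPi n ξ)
            + (R0 n ξ * SPi n η - SPi n η * R0 n ξ)) := by
      rw [hR, R0_add, R0_smul, SPi_add, SPi_smul,
        SPi_eq_zero_of_diag n C1 (diag1 n ξ η),
        SPi_eq_zero_of_diag n C2 (diag2 n ξ η), hC2]
      simp only [R0_add]
      rw [r0_spi_comm1, r0_spi_comm2]
      module
    rw [hRC]
    have hM := R0_mcybe n ξ η
    have key : (Rmat n 1 c₂ ξ * Rmat n 1 c₂ η - Rmat n 1 c₂ η * Rmat n 1 c₂ ξ)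
        - (R0 n C1 + c₂ • ((SPi n ξ * R0 n η - R0 n η * SPi n ξ)
            + (R0 n ξ * SPi n η - SPi n η * R0 n ξ)))
        = (R0 n ξ * R0 n η - R0 n η * R0 n ξ - R0 n C1)
          + (c₂ * c₂) • (SPi n ξ * SPi n η - SPi n η * SPi n ξ) := by
      simp only [hR, add_mul, mul_add, smul_mul_assoc, mul_smul_comm]
      module
    rw [← hC1] at hM
    rw [key, spi_spi_comm, sub_self, smul_zero, add_zero, hM]
    norm_num
end

section
/- The bracket on Mat_n defined on coordinate functions by 2{x_{ij}, x_{αβ}} = (sign(α−i) − sign(β−j)) x_{iβ} x_{αj}, extended by the Leibniz rule, is a Poisson bracket (i.e., it is skew-symmetric and satisfies the Jacobi identity). -/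
/-- The bracket on functions on `Mat_n` determined on coordinate functions by
`2{x_{ij}, x_{αβ}} = (sign(α−i) − sign(β−j)) x_{iβ} x_{αj}`, extended to smooth
functions by bilinearity and the Leibniz rule. -/
noncomputable def pbMat (n : ℕ) (f g : (Fin n → Fin n → ℝ) → ℝ)
    (x : Fin n → Fin n → ℝ) : ℝ :=
  ∑ i : Fin n, ∑ j : Fin n, ∑ a : Fin n, ∑ b : Fin n,
    (1 / 2 : ℝ) *
      (((Int.sign ((a : ℕ) - (i : ℕ) : ℤ)) : ℝ) -
       ((Int.sign ((b : ℕ) - (j : ℕ) : ℤ)) : ℝ)) * x i b * x a j *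
      fderiv ℝ f x (Pi.single i (Pi.single j 1)) *
      fderiv ℝ g x (Pi.single a (Pi.single b 1))

namespace PoissonAux

variable {n : ℕ}

abbrev Mn (n : ℕ) := Fin n → Fin n → ℝ
abbrev Idx (n : ℕ) := Fin n × Fin n

noncomputable def sgr (i a : Fin n) : ℝ := ((Int.sign ((a : ℕ) - (i : ℕ) : ℤ)) : ℝ)

lemma sgr_antisymm (i a : Fin n) : sgr a i = - sgr i a := by
  unfold sgr
  rw [show ((i : ℕ) - (a : ℕ) : ℤ) = -(((a : ℕ) - (i : ℕ) : ℤ)) by ring, Int.sign_neg]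
  push_cast
  ring

lemma sgn_eq (t : ℤ) : t.sign = if 0 < t then 1 else if t < 0 then -1 else 0 := by
  rcases lt_trichotomy t 0 with h|h|h
  · simp [Int.sign_eq_neg_one_of_neg h, h, asymm h, h.ne]
  · simp [h]
  · simp [Int.sign_eq_one_of_pos h, h]

lemma int_g (a b c : ℤ) (h : ¬(a = b ∧ b = c)) :
    (b-a).sign * (c-b).sign - (c-b).sign * (c-a).sign - (c-a).sign * (b-a).sign = -1 := by
  rw [sgn_eq, sgn_eq, sgn_eq]
  split_ifs <;> omega

lemma sgr_g (i k p : Fin n) (h : ¬(i = k ∧ k = p)) :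
    sgr i k * sgr k p - sgr k p * sgr i p - sgr i p * sgr i k = -1 := by
  unfold sgr
  have h' : ¬(((i:ℕ):ℤ) = ((k:ℕ):ℤ) ∧ ((k:ℕ):ℤ) = ((p:ℕ):ℤ)) := by
    simpa [Fin.ext_iff] using h
  exact_mod_cast int_g ((i:ℕ):ℤ) ((k:ℕ):ℤ) ((p:ℕ):ℤ) h'

noncomputable def ee (I : Idx n) : Mn n := Pi.single I.1 (Pi.single I.2 1)

noncomputable def Pc (I : Idx n) : Mn n →L[ℝ] ℝ :=
  (ContinuousLinearMap.proj (R := ℝ) (φ := fun _ : Fin n => ℝ) I.2).comp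
    (ContinuousLinearMap.proj (R := ℝ) (φ := fun _ : Fin n => Fin n → ℝ) I.1)

@[simp] lemma Pc_apply (I : Idx n) (y : Mn n) : Pc I y = y I.1 I.2 := rfl

noncomputable def cc (x : Mn n) (I A : Idx n) : ℝ :=
  1 / 2 * (sgr I.1 A.1 - sgr I.2 A.2) * x I.1 A.2 * x A.1 I.2

lemma cc_skew (x : Mn n) (I A : Idx n) : cc x A I = - cc x I A := by
  unfold cc
  rw [sgr_antisymm I.1 A.1, sgr_antisymm I.2 A.2]
  ring

noncomputable def del (I A : Idx n) : ℝ := if I = A then 1 else 0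

lemma ee_apply (A : Idx n) (p q : Fin n) : ee A p q = del (p, q) A := by
  unfold ee del
  rcases A with ⟨a, b⟩
  simp only [Pi.single_apply, ite_apply, Pi.zero_apply, Prod.mk.injEq]
  split_ifs <;> simp_all

noncomputable def dcc (x : Mn n) (J K A : Idx n) : ℝ :=
  1 / 2 * (sgr J.1 K.1 - sgr J.2 K.2) *
    (del (J.1, K.2) A * x K.1 J.2 + x J.1 K.2 * del (K.1, J.2) A)

lemma pb_eq (f g : Mn n → ℝ) (x : Mn n) :
    pbMat n f g x = ∑ I : Idx n, ∑ A : Idx n,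
      cc x I A * fderiv ℝ f x (ee I) * fderiv ℝ g x (ee A) := by
  simp only [Fintype.sum_prod_type]
  rfl

lemma hB {g : Mn n → ℝ} (hg : ContDiff ℝ (⊤ : ℕ∞) g) (x : Mn n) :
    HasFDerivAt (fderiv ℝ g) (fderiv ℝ (fderiv ℝ g) x) x :=
  (((hg.fderiv_right (m := (⊤ : ℕ∞)) (mod_cast le_top)).differentiable (by simp)) x).hasFDerivAt

lemma hasFDerivAt_Dapp {g : Mn n → ℝ} (hg : ContDiff ℝ (⊤ : ℕ∞) g) (x : Mn n) (u : Mn n) :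
    HasFDerivAt (fun y => fderiv ℝ g y u)
      ((ContinuousLinearMap.apply ℝ ℝ u).comp (fderiv ℝ (fderiv ℝ g) x)) x :=
  (ContinuousLinearMap.apply ℝ ℝ u).hasFDerivAt.comp x (hB hg x)

lemma b2symm {g : Mn n → ℝ} (hg : ContDiff ℝ (⊤ : ℕ∞) g) (x : Mn n) (u v : Mn n) :
    fderiv ℝ (fderiv ℝ g) x u v = fderiv ℝ (fderiv ℝ g) x v u :=
  second_derivative_symmetric (fun y => ((hg.differentiable (by simp)) y).hasFDerivAt) (hB hg x) u v

lemma fderiv_pb {g h : Mn n → ℝ} (hg : ContDiff ℝ (⊤ : ℕ∞) g) (hh : ContDiff ℝ (⊤ : ℕ∞) h) (x v : Mn n) :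
    fderiv ℝ (pbMat n g h) x v = ∑ I : Idx n, ∑ A : Idx n,
      1 / 2 * (sgr I.1 A.1 - sgr I.2 A.2) *
        ( v I.1 A.2 * x A.1 I.2 * fderiv ℝ g x (ee I) * fderiv ℝ h x (ee A)
        + x I.1 A.2 * v A.1 I.2 * fderiv ℝ g x (ee I) * fderiv ℝ h x (ee A)
        + x I.1 A.2 * x A.1 I.2 * fderiv ℝ (fderiv ℝ g) x v (ee I) * fderiv ℝ h x (ee A)
        + x I.1 A.2 * x A.1 I.2 * fderiv ℝ g x (ee I) * fderiv ℝ (fderiv ℝ h) x v (ee A) ) := by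
  have hfun : pbMat n g h = fun y => ∑ I : Idx n, ∑ A : Idx n,
      1 / 2 * (sgr I.1 A.1 - sgr I.2 A.2) * y I.1 A.2 * y A.1 I.2 *
        fderiv ℝ g y (ee I) * fderiv ℝ h y (ee A) := funext fun y => by
    rw [pb_eq g h y]; rfl
  rw [hfun]
  have H : HasFDerivAt (fun y : Mn n => ∑ I : Idx n, ∑ A : Idx n,
      1 / 2 * (sgr I.1 A.1 - sgr I.2 A.2) * y I.1 A.2 * y A.1 I.2 *
        fderiv ℝ g y (ee I) * fderiv ℝ h y (ee A)) _ x :=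
    (HasFDerivAt.sum fun I _ => HasFDerivAt.sum fun A _ =>
      ((((Pc (I.1, A.2)).hasFDerivAt.const_mul
            (1 / 2 * (sgr I.1 A.1 - sgr I.2 A.2))).mul
          (Pc (A.1, I.2)).hasFDerivAt).mul (hasFDerivAt_Dapp hg x (ee I))).mul
        (hasFDerivAt_Dapp hh x (ee A))).congr_of_eventuallyEq
      (Filter.Eventually.of_forall fun y => by simp only [Finset.sum_apply, Pi.mul_apply]; rfl)
  rw [H.fderiv]
  simp only [ContinuousLinearMap.sum_apply, ContinuousLinearMap.add_apply,
    ContinuousLinearMap.coe_smul', Pi.smul_apply, ContinuousLinearMap.coe_comp',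
    Function.comp_apply, ContinuousLinearMap.apply_apply, Pc_apply, smul_eq_mul, Pi.mul_apply]
  refine Finset.sum_congr rfl fun I _ => Finset.sum_congr rfl fun A _ => by ring

lemma fderiv_pb_basis {g h : Mn n → ℝ} (hg : ContDiff ℝ (⊤ : ℕ∞) g) (hh : ContDiff ℝ (⊤ : ℕ∞) h)
    (x : Mn n) (A0 : Idx n) :
    fderiv ℝ (pbMat n g h) x (ee A0) =
      (∑ J : Idx n, ∑ K : Idx n, dcc x J K A0 * fderiv ℝ g x (ee J) * fderiv ℝ h x (ee K))
      + (∑ J : Idx n, ∑ K : Idx n,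
          cc x J K * fderiv ℝ (fderiv ℝ g) x (ee A0) (ee J) * fderiv ℝ h x (ee K))
      + (∑ J : Idx n, ∑ K : Idx n,
          cc x J K * fderiv ℝ g x (ee J) * fderiv ℝ (fderiv ℝ h) x (ee A0) (ee K)) := by
  rw [fderiv_pb hg hh x (ee A0)]
  simp only [← Finset.sum_add_distrib]
  refine Finset.sum_congr rfl fun J _ => Finset.sum_congr rfl fun K _ => ?_
  rw [ee_apply, ee_apply]
  unfold dcc cc
  ring

/-! ### Sum reindexing helpers -/

lemma sum4_eq {ι : Type*} [Fintype ι] (F : ι → ι → ι → ι → ℝ) :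
    (∑ I, ∑ A, ∑ J, ∑ K, F I A J K) = ∑ t : ι × ι × ι × ι, F t.1 t.2.1 t.2.2.1 t.2.2.2 := by
  simp [Fintype.sum_prod_type]

lemma sum4_reindex {ι : Type*} [Fintype ι] (F : ι → ι → ι → ι → ℝ)
    (e : (ι × ι × ι × ι) ≃ (ι × ι × ι × ι)) :
    (∑ I, ∑ A, ∑ J, ∑ K, F I A J K)
      = ∑ I, ∑ A, ∑ J, ∑ K,
          F (e (I, A, J, K)).1 (e (I, A, J, K)).2.1 (e (I, A, J, K)).2.2.1
            (e (I, A, J, K)).2.2.2 := by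
  rw [sum4_eq, sum4_eq]
  exact Fintype.sum_equiv e.symm (fun t => F t.1 t.2.1 t.2.2.1 t.2.2.2)
    (fun t => F (e t).1 (e t).2.1 (e t).2.2.1 (e t).2.2.2) (fun t => by simp)

lemma sum4_cancel {ι : Type*} [Fintype ι] (F G : ι → ι → ι → ι → ℝ)
    (hp : ∀ I A J K, F I A J K + G I A J K = 0) :
    (∑ I, ∑ A, ∑ J, ∑ K, F I A J K) + (∑ I, ∑ A, ∑ J, ∑ K, G I A J K) = 0 := by
  have h2 : (∑ I, ∑ A, ∑ J, ∑ K, (F I A J K + G I A J K)) = (0:ℝ) := by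
    simp [hp]
  rw [← h2]
  simp only [Finset.sum_add_distrib]

/-! ### The abstract framework lemma -/

lemma frame {ι : Type*} [Fintype ι]
    (c : ι → ι → ℝ) (dc : ι → ι → ι → ℝ) (df dg dh : ι → ℝ) (bf bg bh : ι → ι → ℝ)
    (hc : ∀ I A, c A I = - c I A)
    (hbf : ∀ I A, bf I A = bf A I) (hbg : ∀ I A, bg I A = bg A I)
    (hbh : ∀ I A, bh I A = bh A I)
    (hkey : ∀ I J K, (∑ A, (c I A * dc J K A + c J A * dc K I A + c K A * dc I J A)) = 0) :
    (∑ I, ∑ A, c I A * df I *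
        ((∑ J, ∑ K, dc J K A * dg J * dh K) + (∑ J, ∑ K, c J K * bg A J * dh K) +
          (∑ J, ∑ K, c J K * dg J * bh A K)))
    + (∑ I, ∑ A, c I A * dg I *
        ((∑ J, ∑ K, dc J K A * dh J * df K) + (∑ J, ∑ K, c J K * bh A J * df K) +
          (∑ J, ∑ K, c J K * dh J * bf A K)))
    + (∑ I, ∑ A, c I A * dh I *
        ((∑ J, ∑ K, dc J K A * df J * dg K) + (∑ J, ∑ K, c J K * bf A J * dg K) +
          (∑ J, ∑ K, c J K * df J * bg A K))) = 0 := by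
  simp only [mul_add, Finset.mul_sum, Finset.sum_add_distrib]
  -- group 1 : the dc-terms
  have hG1 : (∑ I, ∑ A, ∑ J, ∑ K, c I A * df I * (dc J K A * dg J * dh K))
      + (∑ I, ∑ A, ∑ J, ∑ K, c I A * dg I * (dc J K A * dh J * df K))
      + (∑ I, ∑ A, ∑ J, ∑ K, c I A * dh I * (dc J K A * df J * dg K)) = 0 := by
    rw [show (∑ I, ∑ A, ∑ J, ∑ K, c I A * dg I * (dc J K A * dh J * df K))
        = ∑ I, ∑ A, ∑ J, ∑ K, c J A * dg J * (dc K I A * dh K * df I) from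
      sum4_reindex (fun I A J K => c I A * dg I * (dc J K A * dh J * df K))
        ⟨fun t => (t.2.2.1, t.2.1, t.2.2.2, t.1),
         fun t => (t.2.2.2, t.2.1, t.1, t.2.2.1), fun t => rfl, fun t => rfl⟩]
    rw [show (∑ I, ∑ A, ∑ J, ∑ K, c I A * dh I * (dc J K A * df J * dg K))
        = ∑ I, ∑ A, ∑ J, ∑ K, c K A * dh K * (dc I J A * df I * dg J) from
      sum4_reindex (fun I A J K => c I A * dh I * (dc J K A * df J * dg K))
        ⟨fun t => (t.2.2.2, t.2.1, t.1, t.2.2.1),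
         fun t => (t.2.2.1, t.2.1, t.2.2.2, t.1), fun t => rfl, fun t => rfl⟩]
    have hcomb : (∑ I, ∑ A, ∑ J, ∑ K, c I A * df I * (dc J K A * dg J * dh K))
        + (∑ I, ∑ A, ∑ J, ∑ K, c J A * dg J * (dc K I A * dh K * df I))
        + (∑ I, ∑ A, ∑ J, ∑ K, c K A * dh K * (dc I J A * df I * dg J))
        = ∑ I, ∑ A, ∑ J, ∑ K, df I * dg J * dh K *
            (c I A * dc J K A + c J A * dc K I A + c K A * dc I J A) := by
      simp only [← Finset.sum_add_distrib]
      exact Finset.sum_congr rfl fun I _ => Finset.sum_congr rfl fun A _ =>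
        Finset.sum_congr rfl fun J _ => Finset.sum_congr rfl fun K _ => by ring
    rw [hcomb]
    rw [show (∑ I, ∑ A, ∑ J, ∑ K, df I * dg J * dh K *
            (c I A * dc J K A + c J A * dc K I A + c K A * dc I J A))
        = ∑ I, ∑ A, ∑ J, ∑ K, df I * dg A * dh J *
            (c I K * dc A J K + c A K * dc J I K + c J K * dc I A K) from
      sum4_reindex (fun I A J K => df I * dg J * dh K *
          (c I A * dc J K A + c J A * dc K I A + c K A * dc I J A))
        ⟨fun t => (t.1, t.2.2.2, t.2.1, t.2.2.1),
         fun t => (t.1, t.2.2.1, t.2.2.2, t.2.1), fun t => rfl, fun t => rfl⟩]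
    refine Finset.sum_eq_zero fun I _ => Finset.sum_eq_zero fun A _ =>
      Finset.sum_eq_zero fun J _ => ?_
    rw [← Finset.mul_sum, hkey I A J, mul_zero]
  -- group 2 : bg terms
  have hG2 : (∑ I, ∑ A, ∑ J, ∑ K, c I A * df I * (c J K * bg A J * dh K))
      + (∑ I, ∑ A, ∑ J, ∑ K, c I A * dh I * (c J K * df J * bg A K)) = 0 := by
    rw [show (∑ I, ∑ A, ∑ J, ∑ K, c I A * dh I * (c J K * df J * bg A K))
        = ∑ I, ∑ A, ∑ J, ∑ K, c K J * dh K * (c I A * df I * bg J A) from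
      sum4_reindex (fun I A J K => c I A * dh I * (c J K * df J * bg A K))
        ⟨fun t => (t.2.2.2, t.2.2.1, t.1, t.2.1),
         fun t => (t.2.2.1, t.2.2.2, t.2.1, t.1), fun t => rfl, fun t => rfl⟩]
    exact sum4_cancel _ _ fun I A J K => by rw [hc J K, hbg J A]; ring
  -- group 3 : bh terms
  have hG3 : (∑ I, ∑ A, ∑ J, ∑ K, c I A * df I * (c J K * dg J * bh A K))
      + (∑ I, ∑ A, ∑ J, ∑ K, c I A * dg I * (c J K * bh A J * df K)) = 0 := by
    rw [show (∑ I, ∑ A, ∑ J, ∑ K, c I A * df I * (c J K * dg J * bh A K))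
        = ∑ I, ∑ A, ∑ J, ∑ K, c K J * df K * (c I A * dg I * bh J A) from
      sum4_reindex (fun I A J K => c I A * df I * (c J K * dg J * bh A K))
        ⟨fun t => (t.2.2.2, t.2.2.1, t.1, t.2.1),
         fun t => (t.2.2.1, t.2.2.2, t.2.1, t.1), fun t => rfl, fun t => rfl⟩]
    rw [add_comm]
    exact sum4_cancel _ _ fun I A J K => by rw [hc J K, hbh J A]; ring
  -- group 4 : bf terms
  have hG4 : (∑ I, ∑ A, ∑ J, ∑ K, c I A * dg I * (c J K * dh J * bf A K))
      + (∑ I, ∑ A, ∑ J, ∑ K, c I A * dh I * (c J K * bf A J * dg K)) = 0 := by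
    rw [show (∑ I, ∑ A, ∑ J, ∑ K, c I A * dg I * (c J K * dh J * bf A K))
        = ∑ I, ∑ A, ∑ J, ∑ K, c K J * dg K * (c I A * dh I * bf J A) from
      sum4_reindex (fun I A J K => c I A * dg I * (c J K * dh J * bf A K))
        ⟨fun t => (t.2.2.2, t.2.2.1, t.1, t.2.1),
         fun t => (t.2.2.1, t.2.2.2, t.2.1, t.1), fun t => rfl, fun t => rfl⟩]
    rw [add_comm]
    exact sum4_cancel _ _ fun I A J K => by rw [hc J K, hbf J A]; ring
  linarith [hG1, hG2, hG3, hG4]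

/-! ### The key combinatorial identity -/

lemma core (x : Mn n) (i j k l p q : Fin n) :
    1/2 * (sgr k p - sgr l q) *
      ((1/2 * (sgr i k - sgr j q) * x i q * x k j) * x p l
        + x k q * (1/2 * (sgr i p - sgr j l) * x i l * x p j))
    + 1/2 * (sgr p i - sgr q j) *
      ((1/2 * (sgr k p - sgr l j) * x k j * x p l) * x i q
        + x p j * (1/2 * (sgr k i - sgr l q) * x k q * x i l))
    + 1/2 * (sgr i k - sgr j l) *
      ((1/2 * (sgr p i - sgr q l) * x p l * x i q) * x k j
        + x i l * (1/2 * (sgr p k - sgr q j) * x p j * x k q)) = 0 := by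
  rw [sgr_antisymm i p, sgr_antisymm j q, sgr_antisymm j l, sgr_antisymm i k,
    sgr_antisymm l q, sgr_antisymm k p]
  by_cases h1 : i = k ∧ k = p
  · obtain ⟨rfl, rfl⟩ := h1; ring
  by_cases h2 : j = l ∧ l = q
  · obtain ⟨rfl, rfl⟩ := h2; ring
  have hr := sgr_g i k p h1
  have hcq := sgr_g j l q h2
  linear_combination (1/4 * (x i q * x k j * x p l - x i l * x p j * x k q)) * hr
    - (1/4 * (x i q * x k j * x p l - x i l * x p j * x k q)) * hcq

lemma sum_cc_dcc (x : Mn n) (I J K : Idx n) :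
    (∑ A : Idx n, cc x I A * dcc x J K A)
      = 1 / 2 * (sgr J.1 K.1 - sgr J.2 K.2) *
          (cc x I (J.1, K.2) * x K.1 J.2 + x J.1 K.2 * cc x I (K.1, J.2)) := by
  have hpt : ∀ A : Idx n, cc x I A * dcc x J K A
      = (if (J.1, K.2) = A then cc x I A * (1 / 2 * (sgr J.1 K.1 - sgr J.2 K.2) * x K.1 J.2)
          else 0)
        + (if (K.1, J.2) = A then cc x I A * (1 / 2 * (sgr J.1 K.1 - sgr J.2 K.2) * x J.1 K.2)
          else 0) := by
    intro A
    unfold dcc del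
    split_ifs <;> ring
  simp only [hpt, Finset.sum_add_distrib, Finset.sum_ite_eq, Finset.mem_univ, if_true]
  ring

lemma hkey_pb (x : Mn n) (I J K : Idx n) :
    (∑ A : Idx n, (cc x I A * dcc x J K A + cc x J A * dcc x K I A + cc x K A * dcc x I J A))
      = 0 := by
  rw [Finset.sum_add_distrib, Finset.sum_add_distrib, sum_cc_dcc, sum_cc_dcc, sum_cc_dcc]
  obtain ⟨i, j⟩ := I; obtain ⟨k, l⟩ := J; obtain ⟨p, q⟩ := K
  exact core x i j k l p q

end PoissonAux

open PoissonAux in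
/-- The bracket `2{x_{ij}, x_{αβ}} = (sign(α−i) − sign(β−j)) x_{iβ} x_{αj}` extended by
the Leibniz rule is a Poisson bracket: it is skew-symmetric and satisfies the Jacobi
identity. -/
theorem pbMat_is_Poisson (n : ℕ) :
    (∀ (f g : (Fin n → Fin n → ℝ) → ℝ) (x : Fin n → Fin n → ℝ),
      pbMat n f g x = - pbMat n g f x) ∧
    (∀ (f g h : (Fin n → Fin n → ℝ) → ℝ),
      ContDiff ℝ (⊤ : ℕ∞) f → ContDiff ℝ (⊤ : ℕ∞) g → ContDiff ℝ (⊤ : ℕ∞) h →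
      ∀ x : Fin n → Fin n → ℝ,
        pbMat n f (pbMat n g h) x + pbMat n g (pbMat n h f) x +
          pbMat n h (pbMat n f g) x = 0) := by
  constructor
  · intro f g x
    rw [pb_eq f g x, pb_eq g f x, Finset.sum_comm, ← Finset.sum_neg_distrib]
    refine Finset.sum_congr rfl fun A _ => ?_
    rw [← Finset.sum_neg_distrib]
    refine Finset.sum_congr rfl fun I _ => ?_
    rw [cc_skew x I A]
    ring
  · intro f g h hf hg hh x
    rw [pb_eq f (pbMat n g h) x, pb_eq g (pbMat n h f) x, pb_eq h (pbMat n f g) x]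
    simp only [fderiv_pb_basis hg hh x, fderiv_pb_basis hh hf x, fderiv_pb_basis hf hg x]
    exact frame (cc x) (dcc x)
      (fun I => fderiv ℝ f x (ee I)) (fun I => fderiv ℝ g x (ee I))
      (fun I => fderiv ℝ h x (ee I))
      (fun I A => fderiv ℝ (fderiv ℝ f) x (ee I) (ee A))
      (fun I A => fderiv ℝ (fderiv ℝ g) x (ee I) (ee A))
      (fun I A => fderiv ℝ (fderiv ℝ h) x (ee I) (ee A))
      (cc_skew x)
      (fun I A => b2symm hf x (ee I) (ee A))
      (fun I A => b2symm hg x (ee I) (ee A))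
      (fun I A => b2symm hh x (ee I) (ee A))
      (hkey_pb x)
end

section
/- The concordance number of a closed polygonal curve C is independent of the choice of the auxiliary oriented line l, provided l is not collinear with any segment of C: for any two such lines l, l', Σ c_l(e',e'') = Σ c_{l'}(e',e'') (mod 2), the sums being over consecutive segment pairs of C. -/
/-!
For a pair `(u, w)` of consecutive segments, `c_l(u, w) + c_{l'}(u, w)` is a coboundary mod 2:
it equals `g u + g w` for a function `g` depending only on `l` and `l'`. If `l, l'` are
independent, `g x` says whether `x` lies in the open cone spanned by `l` and `l'`; if `l'` is a
negative multiple of `l`, whether `x` lies on the positive side of `l`; if a positive multiple,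
`g = 0`. Summed around the closed curve every `g (seg v i)` occurs twice, so the sum vanishes.
-/

/-- `l` lies in the interior of the cone spanned by `u` and `w` (nonempty interior
requires `u, w` linearly independent). -/
def inConeInt (u w l : ℝ × ℝ) : Prop :=
  LinearIndependent ℝ ![u, w] ∧ ∃ a b : ℝ, 0 < a ∧ 0 < b ∧ l = a • u + b • w

/-- The oriented segment of the closed polygonal curve with vertices `v` starting at
`v i`. -/
def seg {m : ℕ} [NeZero m] (v : Fin m → ℝ × ℝ) (i : Fin m) : ℝ × ℝ := v (i + 1) - v i

open Classical in
/-- `c_l(C)` as an element of `ℤ/2ℤ`: the mod-2 number of consecutive-segment pairs of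
the closed polygonal curve `v` whose spanned cone contains the direction of `l`. -/
noncomputable def concordanceAt {m : ℕ} [NeZero m] (v : Fin m → ℝ × ℝ)
    (l : ℝ × ℝ) : ZMod 2 :=
  ∑ i : Fin m, if inConeInt (seg v i) (seg v (i + 1)) l then 1 else 0

open Finset

def cross (p q : ℝ × ℝ) : ℝ := p.1 * q.2 - p.2 * q.1

lemma cross_comm (p q : ℝ × ℝ) : cross q p = -cross p q := by
  simp only [cross]; ring

lemma cross_smul_left (t : ℝ) (p q : ℝ × ℝ) : cross (t • p) q = t * cross p q := by
  simp only [cross, Prod.smul_fst, Prod.smul_snd, smul_eq_mul]; ring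

lemma cross_smul_right (t : ℝ) (p q : ℝ × ℝ) : cross p (t • q) = t * cross p q := by
  simp only [cross, Prod.smul_fst, Prod.smul_snd, smul_eq_mul]; ring

lemma cross_neg_right (p q : ℝ × ℝ) : cross p (-q) = -cross p q := by
  simp only [cross, Prod.fst_neg, Prod.snd_neg]; ring

lemma cross_smul_add_smul_right (a b : ℝ) (u w : ℝ × ℝ) :
    cross u (a • u + b • w) = b * cross u w := by
  simp only [cross, Prod.fst_add, Prod.snd_add, Prod.smul_fst, Prod.smul_snd, smul_eq_mul]; ring

lemma cross_smul_add_smul_left (a b : ℝ) (u w : ℝ × ℝ) :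
    cross (a • u + b • w) w = a * cross u w := by
  simp only [cross, Prod.fst_add, Prod.snd_add, Prod.smul_fst, Prod.smul_snd, smul_eq_mul]; ring

lemma cross_smul_add_smul_eq (u w l : ℝ × ℝ) :
    cross u w • l = cross l w • u + cross u l • w := by
  ext <;> simp only [cross, Prod.fst_add, Prod.snd_add, Prod.smul_fst, Prod.smul_snd,
    smul_eq_mul] <;> ring

lemma cross_mul_cross_sub_cross_mul_cross (u w l l' : ℝ × ℝ) :
    cross u w * cross l l' = cross u l * cross w l' - cross u l' * cross w l := by
  simp only [cross]; ring

lemma linearIndependent_pair_iff_cross_ne_zero {u w : ℝ × ℝ} :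
    LinearIndependent ℝ ![u, w] ↔ cross u w ≠ 0 := by
  rw [LinearIndependent.pair_iff]
  constructor
  · intro h hc
    obtain ⟨-, hu₂⟩ := h w.2 (-u.2) (by ext <;> simp [cross] at hc ⊢ <;> linarith)
    obtain ⟨-, hu₁⟩ := h w.1 (-u.1) (by ext <;> simp [cross] at hc ⊢ <;> linarith)
    have hu : u = 0 := Prod.ext (neg_eq_zero.1 hu₁) (neg_eq_zero.1 hu₂)
    exact one_ne_zero (h 1 0 (by simp [hu])).1
  · intro hc s t hst
    have h₁ : s * u.1 + t * w.1 = 0 := congrArg Prod.fst hst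
    have h₂ : s * u.2 + t * w.2 = 0 := congrArg Prod.snd hst
    constructor
    · refine (mul_eq_zero.1 ?_).resolve_right hc
      simp only [cross]; linear_combination w.2 * h₁ - w.1 * h₂
    · refine (mul_eq_zero.1 ?_).resolve_right hc
      simp only [cross]; linear_combination u.1 * h₂ - u.2 * h₁

lemma inConeInt_iff_cross {u w l : ℝ × ℝ} :
    inConeInt u w l ↔
      cross u w ≠ 0 ∧ 0 < cross u l * cross u w ∧ 0 < cross l w * cross u w := by
  rw [inConeInt, linearIndependent_pair_iff_cross_ne_zero]
  constructor
  · rintro ⟨hA, a, b, ha, hb, rfl⟩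
    have hA2 := mul_self_pos.2 hA
    rw [cross_smul_add_smul_right, cross_smul_add_smul_left, mul_assoc, mul_assoc]
    exact ⟨hA, mul_pos hb hA2, mul_pos ha hA2⟩
  · rintro ⟨hA, hb, ha⟩
    have hA2 := mul_self_pos.2 hA
    refine ⟨hA, cross l w / cross u w, cross u l / cross u w, ?_, ?_, ?_⟩
    · simpa only [mul_div_mul_right _ _ hA] using div_pos ha hA2
    · simpa only [mul_div_mul_right _ _ hA] using div_pos hb hA2
    · rw [div_eq_inv_mul, div_eq_inv_mul, mul_smul, mul_smul, ← smul_add,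
        ← cross_smul_add_smul_eq, inv_smul_smul₀ hA]

lemma inConeInt_smul_iff {u w l : ℝ × ℝ} {t : ℝ} (ht : 0 < t) :
    inConeInt u w (t • l) ↔ inConeInt u w l := by
  simp only [inConeInt_iff_cross, cross_smul_right, cross_smul_left, mul_assoc,
    mul_pos_iff_of_pos_left ht]

lemma exists_eq_smul_of_cross_eq_zero {u w : ℝ × ℝ} (hu : u ≠ 0) (h : cross u w = 0) :
    ∃ c : ℝ, w = c • u := by
  by_contra! hne
  exact linearIndependent_pair_iff_cross_ne_zero.1
    ((LinearIndependent.pair_iff' hu).2 fun c => (hne c).symm) h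

lemma exists_pos_smul_of_cross_eq_zero {u w : ℝ × ℝ} (hu : u ≠ 0) (hw : w ≠ 0)
    (hcone : ¬∃ t : ℝ, t < 0 ∧ w = t • u) (h : cross u w = 0) : ∃ c : ℝ, 0 < c ∧ w = c • u := by
  obtain ⟨c, rfl⟩ := exists_eq_smul_of_cross_eq_zero hu h
  rcases lt_trichotomy c 0 with hc | rfl | hc
  · exact absurd ⟨c, hc, rfl⟩ hcone
  · exact absurd (zero_smul ℝ u) hw
  · exact ⟨c, hc, rfl⟩

open Classical in
noncomputable def ind (p : Prop) : ZMod 2 := if p then 1 else 0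

lemma ind_inConeInt_of_cross_eq_zero {u w l : ℝ × ℝ} (h : cross u w = 0) :
    ind (inConeInt u w l) = 0 :=
  if_neg fun hl => (inConeInt_iff_cross.1 hl).1 h

lemma ind_inConeInt_add_ind_inConeInt_neg {u w l : ℝ × ℝ} (hA : cross u w ≠ 0)
    (hP : cross u l ≠ 0) (hR : cross w l ≠ 0) :
    ind (inConeInt u w l) + ind (inConeInt u w (-l)) =
      ind (0 < cross u l) + ind (0 < cross w l) := by
  simp only [inConeInt_iff_cross, cross_comm w l, cross_comm w (-l), cross_neg_right, neg_neg,
    ne_eq, hA, not_false_eq_true, true_and]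
  generalize cross u w = A at *
  generalize cross u l = P at *
  generalize cross w l = R at *
  simp only [ind, mul_pos_iff, neg_pos, neg_lt_zero]
  rcases hA.lt_or_gt with hA | hA <;> rcases hP.lt_or_gt with hP | hP <;>
    rcases hR.lt_or_gt with hR | hR <;>
    simp [hA, hP, hR, hA.not_gt, hP.not_gt, hR.not_gt] <;> decide

lemma ind_inConeInt_add_ind_inConeInt {u w l l' : ℝ × ℝ} (hA : cross u w ≠ 0)
    (hB : cross l l' ≠ 0) (hP : cross u l ≠ 0) (hQ : cross u l' ≠ 0) (hR : cross w l ≠ 0)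
    (hS : cross w l' ≠ 0) :
    ind (inConeInt u w l) + ind (inConeInt u w l') =
      ind (inConeInt l l' u) + ind (inConeInt l l' w) := by
  -- Only the Plücker relation links the six signs; it rules out the unrealisable sign patterns.
  have plucker := cross_mul_cross_sub_cross_mul_cross u w l l'
  simp only [inConeInt_iff_cross, cross_comm w l, cross_comm w l', cross_comm u l, ne_eq, hA, hB,
    not_false_eq_true, true_and]
  generalize cross u w = A at *
  generalize cross l l' = B at *
  generalize cross u l = P at *
  generalize cross u l' = Q at *
  generalize cross w l = R at *
  generalize cross w l' = S at *
  simp only [ind, mul_pos_iff, neg_pos, neg_lt_zero]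
  rcases hA.lt_or_gt with hA | hA <;> rcases hB.lt_or_gt with hB | hB <;>
    rcases hP.lt_or_gt with hP | hP <;> rcases hQ.lt_or_gt with hQ | hQ <;>
    rcases hR.lt_or_gt with hR | hR <;> rcases hS.lt_or_gt with hS | hS <;>
    first
    | (exfalso; nlinarith)
    | (simp [hA, hB, hP, hQ, hR, hS, hA.not_gt, hB.not_gt, hP.not_gt,
        hQ.not_gt, hR.not_gt, hS.not_gt] <;> decide)

lemma exists_ind_inConeInt_add_ind_inConeInt_eq {l l' : ℝ × ℝ} (hl : l ≠ 0) (hl' : l' ≠ 0) :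
    ∃ g : ℝ × ℝ → ZMod 2, ∀ u w : ℝ × ℝ, (¬∃ t : ℝ, t < 0 ∧ w = t • u) →
      cross u l ≠ 0 → cross u l' ≠ 0 → cross w l ≠ 0 → cross w l' ≠ 0 →
      ind (inConeInt u w l) + ind (inConeInt u w l') = g u + g w := by
  suffices ∃ g : ℝ × ℝ → ZMod 2, (∀ (c : ℝ) (x : ℝ × ℝ), 0 < c → g (c • x) = g x) ∧
      ∀ u w : ℝ × ℝ, cross u w ≠ 0 → cross u l ≠ 0 → cross u l' ≠ 0 → cross w l ≠ 0 →
        cross w l' ≠ 0 → ind (inConeInt u w l) + ind (inConeInt u w l') = g u + g w by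
    obtain ⟨g, hg_smul, hg⟩ := this
    refine ⟨g, fun u w hcone hP hQ hR hS => ?_⟩
    -- A degenerate pair `w = c • u`, `c > 0`, contributes `0` to both sides.
    rcases eq_or_ne (cross u w) 0 with hA | hA
    · have hu : u ≠ 0 := fun hu => hP (by simp [hu, cross])
      have hw : w ≠ 0 := fun hw => hR (by simp [hw, cross])
      obtain ⟨c, hc, rfl⟩ := exists_pos_smul_of_cross_eq_zero hu hw hcone hA
      rw [ind_inConeInt_of_cross_eq_zero hA, ind_inConeInt_of_cross_eq_zero hA, hg_smul c u hc,
        CharTwo.add_self_eq_zero, CharTwo.add_self_eq_zero]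
    · exact hg u w hA hP hQ hR hS
  rcases eq_or_ne (cross l l') 0 with hB | hB
  · obtain ⟨s, rfl⟩ := exists_eq_smul_of_cross_eq_zero hl hB
    rcases lt_trichotomy s 0 with hs | rfl | hs
    · refine ⟨fun x => ind (0 < cross x l), fun c x hc => ?_, fun u w hA hP _ hR _ => ?_⟩
      · simp only [cross_smul_left, mul_pos_iff_of_pos_left hc]
      · rw [show s • l = (-s) • -l by rw [smul_neg, neg_smul, neg_neg],
          inConeInt_smul_iff (neg_pos.2 hs)]
        exact ind_inConeInt_add_ind_inConeInt_neg hA hP hR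
    · exact absurd (zero_smul ℝ l) hl'
    · refine ⟨0, fun _ _ _ => rfl, fun u w _ _ _ _ _ => ?_⟩
      rw [inConeInt_smul_iff hs, CharTwo.add_self_eq_zero, Pi.zero_apply, Pi.zero_apply, add_zero]
  · exact ⟨fun x => ind (inConeInt l l' x), fun c x hc => by simp only [inConeInt_smul_iff hc],
      fun u w hA hP hQ hR hS => ind_inConeInt_add_ind_inConeInt hA hB hP hQ hR hS⟩

lemma sum_add_apply_add_one_eq_zero {R : Type*} [Semiring R] [CharP R 2] {m : ℕ} [NeZero m]
    (g : Fin m → R) : ∑ i, (g i + g (i + 1)) = 0 := by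
  rw [sum_add_distrib, Fintype.sum_equiv (Equiv.addRight 1) (fun i => g (i + 1)) g fun _ => rfl,
    CharTwo.add_self_eq_zero]

/-- The concordance number of a closed polygonal curve is independent of the auxiliary
oriented line: if no two consecutive segments span a full line (i.e. no segment is a
negative multiple of its predecessor) and the lines `l`, `l'` are not collinear with any
segment of the curve, then `c_l(C) = c_{l'}(C)` (mod 2). -/
theorem concordance_independent_of_line (m : ℕ) [NeZero m] (v : Fin m → ℝ × ℝ)
    (hcone : ∀ i : Fin m, ¬ ∃ t : ℝ, t < 0 ∧ seg v (i + 1) = t • seg v i)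
    (l l' : ℝ × ℝ)
    (hl : ∀ i : Fin m, LinearIndependent ℝ ![seg v i, l])
    (hl' : ∀ i : Fin m, LinearIndependent ℝ ![seg v i, l']) :
    concordanceAt v l = concordanceAt v l' := by
  have hc : ∀ {x y : ℝ × ℝ}, LinearIndependent ℝ ![x, y] → cross x y ≠ 0 :=
    linearIndependent_pair_iff_cross_ne_zero.1
  obtain ⟨g, hg⟩ :=
    exists_ind_inConeInt_add_ind_inConeInt_eq ((hl 0).ne_zero 1) ((hl' 0).ne_zero 1)
  rw [← CharTwo.add_eq_zero]
  calc concordanceAt v l + concordanceAt v l' = ∑ i, (g (seg v i) + g (seg v (i + 1))) := by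
        rw [concordanceAt, concordanceAt, ← sum_add_distrib]
        exact sum_congr rfl fun i _ => hg _ _ (hcone i) (hc (hl i)) (hc (hl' i)) (hc (hl (i + 1)))
          (hc (hl' (i + 1)))
    _ = 0 := sum_add_apply_add_one_eq_zero _
end

section
/- Minors of the matrix Y parametrizing the open cell of the Grassmannian are expressed through Plücker coordinates: for 1 ≤ α_1 < ... < α_l ≤ k and 1 ≤ β_1 < ... < β_l ≤ n−k, det(Y_{α_i β_j})_{i,j=1}^l = (−1)^{kl − l(l−1)/2 − (α_1+...+α_l)} · x_{([1,k]∖{α_1,...,α_l}) ∪ {β_1+k,...,β_l+k}} / x_{[1,k]}, where x_I is the Plücker coordinate of the k×n matrix [1_k Y] on column set I. -/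
/-!
Let `c` enumerate `[1,k] ∖ α` increasingly and let `τ` be the shuffle `(c, α)` of `[1,k]`. The
columns of `[1_k Y]` indexed by `S` are `e_{c_1}, …, e_{c_{k-l}}` followed by the columns `β` of
`Y`; permuting the rows by `τ` makes this matrix block upper triangular with diagonal blocks `1`
and `Y_{αβ}`, so `x_S = sgn τ · det Y_{αβ}`, while `x_{[1,k]} = 1`. As `τ` is increasing on both
blocks, its inversions are the pairs `(c_i, α_t)` with `c_i > α_t`; for each `t` (counted from `0`)
there are `k - l + t - α_t` of them, and summing over `t` gives `kl − l(l−1)/2 − Σ (α_t + 1)`.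
-/

open Matrix

/-- The `k×n` matrix `[1_k  Y]` (identity block followed by `Y`), `n = k + m`. -/
def idY (k m : ℕ) (Y : Matrix (Fin k) (Fin m) ℝ) : Matrix (Fin k) (Fin (k + m)) ℝ :=
  Matrix.of fun p => Fin.append (fun q : Fin k => if p = q then (1 : ℝ) else 0) (Y p)

/-- The Plücker coordinate `x_S` of `[1_k  Y]`: the minor on the columns indexed by the
`k`-element subset `S` of `[1, k+m]`, taken in increasing order. -/
noncomputable def plucker (k m : ℕ) (Y : Matrix (Fin k) (Fin m) ℝ)
    (S : Finset (Fin (k + m))) (hS : S.card = k) : ℝ :=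
  ((idY k m Y).submatrix id fun q : Fin k => ((S.orderIsoOfFin hS q : S) : Fin (k + m))).det

open Finset

theorem Fin.strictMono_append {α : Type*} [Preorder α] {r l : ℕ} {f : Fin r → α}
    {g : Fin l → α} (hf : StrictMono f) (hg : StrictMono g) (hfg : ∀ i j, f i < g j) :
    StrictMono (Fin.append f g) := by
  intro a b hab
  induction a using Fin.addCases with
  | left i =>
    induction b using Fin.addCases with
    | left j => simpa using hf ((Fin.strictMono_castAdd l).lt_iff_lt.mp hab)
    | right j => simpa using hfg i j
  | right i =>
    induction b using Fin.addCases with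
    | left j => exact absurd hab (by simp [Fin.lt_def]; omega)
    | right j => simpa using hg ((Fin.natAdd_lt_natAdd_iff r).mp hab)

theorem Fin.exists_perm_coe_eq_append {r l : ℕ} {α : Fin l → Fin (r + l)}
    (hα : Function.Injective α) :
    ∃ (c : Fin r → Fin (r + l)) (τ : Equiv.Perm (Fin (r + l))),
      StrictMono c ∧ ⇑τ = Fin.append c α := by
  have hC : #(univ \ univ.image α) = r := by
    rw [card_univ_sdiff, card_image_of_injective _ hα]
    simp
  set c := (univ \ univ.image α).orderEmbOfFin hC
  have hcα (q : Fin r) (t : Fin l) : c q ≠ α t := fun h =>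
    (mem_sdiff.mp (orderEmbOfFin_mem _ hC q)).2 (h ▸ mem_image_of_mem α (mem_univ t))
  exact ⟨c, Equiv.ofBijective _ (Finite.injective_iff_bijective.mp
    (Fin.append_injective_iff.mpr ⟨c.injective, hα, hcα⟩)), c.strictMono, rfl⟩

theorem Fin.sum_univ_val_mul_two (l : ℕ) : (∑ t : Fin l, (t : ℤ)) * 2 = l * (l - 1) := by
  rw [Fin.sum_univ_eq_sum_range (fun i => (i : ℤ)) l]
  induction l with
  | zero => simp
  | succ n ih => rw [sum_range_succ, add_mul, ih]; push_cast; ring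

theorem Fin.sum_add_val_sub_eq (r l : ℕ) (a : Fin l → ℤ) :
    ∑ t : Fin l, ((r + t : ℤ) - a t) =
      ((r + l : ℕ) : ℤ) * l - l * (l - 1) / 2 - ∑ t : Fin l, (a t + 1) := by
  have hgauss := Fin.sum_univ_val_mul_two l
  rw [Int.ediv_eq_of_eq_mul_left two_ne_zero hgauss.symm]
  simp only [sum_add_distrib, sum_sub_distrib, sum_const, nsmul_eq_mul]
  push_cast
  linear_combination hgauss

theorem Int.cast_val_neg_one_zpow {K : Type*} [DivisionRing K] (n : ℤ) :
    ((((-1 : ℤˣ) ^ n : ℤˣ) : ℤ) : K) = (-1) ^ n := by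
  rcases Int.even_or_odd n with h | h <;> simp [h.neg_one_zpow]

namespace Equiv.Perm

variable {r l : ℕ} {c : Fin r → Fin (r + l)} {d : Fin l → Fin (r + l)}
  {τ : Perm (Fin (r + l))}

theorem card_filter_apply_lt_natAdd_of_coe_eq_append (hd : StrictMono d)
    (hτ : ⇑τ = Fin.append c d) (t : Fin l) :
    #{i ∈ Iio (Fin.natAdd r t) | τ i < τ (Fin.natAdd r t)} = d t := by
  have hprec (i : Fin (r + l)) (hi : τ i < τ (Fin.natAdd r t)) : i < Fin.natAdd r t := by
    by_contra! hle
    induction i using Fin.addCases with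
    | left q => exact absurd hle (by simp [Fin.le_def]; omega)
    | right s =>
      simp only [hτ, Fin.append_right] at hi
      exact absurd (hd.monotone (by simpa using hle)) (not_le.2 hi)
  calc #{i ∈ Iio (Fin.natAdd r t) | τ i < τ (Fin.natAdd r t)}
      = #((Iio (τ (Fin.natAdd r t))).map τ.symm.toEmbedding) := by
        congr 1; ext i; simpa using hprec i
    _ = d t := by simp [hτ]

theorem sign_eq_of_coe_eq_append (hc : StrictMono c) (hd : StrictMono d)
    (hτ : ⇑τ = Fin.append c d) : sign τ = (-1) ^ ∑ t : Fin l, ((r + t : ℤ) - d t) := by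
  have prod_castAdd (q : Fin r) :
      ∏ i ∈ Iio (Fin.castAdd l q), (if τ i < τ (Fin.castAdd l q) then 1 else -1 : ℤˣ) = 1 := by
    refine prod_eq_one fun i hi => if_pos ?_
    have hiq : (i : ℕ) < q := by simpa [Fin.lt_def] using hi
    rw [← Fin.castAdd_castLT l i (by omega), hτ, Fin.append_left, Fin.append_left]
    exact hc (by simpa [Fin.lt_def] using hiq)
  have prod_natAdd (t : Fin l) :
      ∏ i ∈ Iio (Fin.natAdd r t), (if τ i < τ (Fin.natAdd r t) then 1 else -1 : ℤˣ) =
        (-1) ^ #{i ∈ Iio (Fin.natAdd r t) | ¬ τ i < τ (Fin.natAdd r t)} := by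
    rw [prod_ite, prod_const_one, prod_const, one_mul]
  rw [sign_eq_prod_prod_Iio, Fin.prod_univ_add]
  simp only [prod_castAdd, prod_natAdd, prod_const_one, one_mul, prod_pow_eq_pow_sum]
  rw [← zpow_natCast]
  congr 1
  push_cast
  refine sum_congr rfl fun t _ => ?_
  have hsplit := card_filter_add_card_filter_not (s := Iio (Fin.natAdd r t))
    (fun i => τ i < τ (Fin.natAdd r t))
  rw [card_filter_apply_lt_natAdd_of_coe_eq_append hd hτ, Fin.card_Iio] at hsplit
  simp only [Fin.val_natAdd] at hsplit
  omega

end Equiv.Perm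

theorem Matrix.det_eq_det_mul_det_of_natAdd_castAdd_eq_zero {R : Type*} [CommRing R]
    {r l : ℕ} (M : Matrix (Fin (r + l)) (Fin (r + l)) R)
    (h : ∀ i j, M (Fin.natAdd r i) (Fin.castAdd l j) = 0) :
    M.det = (M.submatrix (Fin.castAdd l) (Fin.castAdd l)).det *
      (M.submatrix (Fin.natAdd r) (Fin.natAdd r)).det := by
  have hblocks : M.submatrix finSumFinEquiv finSumFinEquiv =
      fromBlocks (M.submatrix (Fin.castAdd l) (Fin.castAdd l))
        (M.submatrix (Fin.castAdd l) (Fin.natAdd r)) 0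
        (M.submatrix (Fin.natAdd r) (Fin.natAdd r)) := by
    ext (i | i) (j | j) <;> simp [h]
  rw [← det_submatrix_equiv_self finSumFinEquiv, hblocks, det_fromBlocks_zero₂₁]

section Plucker

variable {k m : ℕ} (Y : Matrix (Fin k) (Fin m) ℝ)

@[simp]
theorem idY_castAdd (p q : Fin k) : idY k m Y p (Fin.castAdd m q) = if p = q then 1 else 0 := by
  simp [idY]

@[simp]
theorem idY_natAdd (p : Fin k) (j : Fin m) : idY k m Y p (Fin.natAdd k j) = Y p j := by
  simp [idY]

theorem idY_submatrix_castAdd : (idY k m Y).submatrix id (Fin.castAdd m) = 1 := by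
  ext p q
  simp [one_apply]

theorem plucker_eq_det_submatrix {S : Finset (Fin (k + m))} (hS : S.card = k)
    {g : Fin k → Fin (k + m)} (hg : StrictMono g) (hgS : ∀ q, g q ∈ S) :
    plucker k m Y S hS = ((idY k m Y).submatrix id g).det := by
  rw [plucker, orderEmbOfFin_unique hS hgS hg]
  rfl

end Plucker

theorem det_idY_submatrix_append {r l m : ℕ} (Y : Matrix (Fin (r + l)) (Fin m) ℝ)
    {c : Fin r → Fin (r + l)} {α : Fin l → Fin (r + l)} (β : Fin l → Fin m)
    {τ : Equiv.Perm (Fin (r + l))} (hτ : ⇑τ = Fin.append c α) :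
    ((idY (r + l) m Y).submatrix id
        (Fin.append (Fin.castAdd m ∘ c) (Fin.natAdd (r + l) ∘ β))).det =
      Equiv.Perm.sign τ * (Y.submatrix α β).det := by
  obtain ⟨hc, -, hcα⟩ := Fin.append_injective_iff.mp (hτ ▸ τ.injective)
  set N := (idY (r + l) m Y).submatrix id
    (Fin.append (Fin.castAdd m ∘ c) (Fin.natAdd (r + l) ∘ β))
  have hblock : (N.submatrix τ id).det = (Y.submatrix α β).det := by
    have htop : (N.submatrix τ id).submatrix (Fin.castAdd l) (Fin.castAdd l) = 1 := by
      ext i j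
      simp [N, hτ, one_apply, hc.eq_iff]
    rw [det_eq_det_mul_det_of_natAdd_castAdd_eq_zero, htop, det_one, one_mul]
    · congr 1
      ext i j
      simp [N, hτ]
    · intro i j
      simp [N, hτ, (hcα j i).symm]
  rw [det_permute] at hblock
  rw [← hblock, ← mul_assoc, ← Int.cast_mul, ← Units.val_mul, Int.units_mul_self]
  simp

/-- Minors of `Y` are expressed through Plücker coordinates of `[1_k  Y]`: for row
indices `α_1 < … < α_l` and column indices `β_1 < … < β_l`,
`det(Y_{α_i β_j}) = (−1)^{kl − l(l−1)/2 − (α_1+⋯+α_l)} ·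
  x_{([1,k]∖{α}) ∪ {β+k}} / x_{[1,k]}`
(the `α_i` being counted `1`-based as in the paper). -/
theorem minor_eq_plucker_ratio (k m l : ℕ) (Y : Matrix (Fin k) (Fin m) ℝ)
    (α : Fin l → Fin k) (hα : StrictMono α)
    (β : Fin l → Fin m) (hβ : StrictMono β)
    (S : Finset (Fin (k + m)))
    (hSdef : S = (Finset.univ \ Finset.image α Finset.univ).image (Fin.castAdd m) ∪
        Finset.image (fun t => Fin.natAdd k (β t)) Finset.univ)
    (hS : S.card = k)
    (S₀ : Finset (Fin (k + m)))
    (hS₀def : S₀ = Finset.image (Fin.castAdd m) Finset.univ)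
    (hS₀ : S₀.card = k) :
    (Y.submatrix α β).det =
      (-1 : ℝ) ^ ((k * l : ℤ) - l * (l - 1) / 2 - ∑ t : Fin l, (((α t : ℕ) : ℤ) + 1)) *
        plucker k m Y S hS / plucker k m Y S₀ hS₀ := by
  obtain ⟨r, rfl⟩ : ∃ r, k = r + l :=
    Nat.exists_eq_add_of_le' (by simpa using Fintype.card_le_of_injective α hα.injective)
  obtain ⟨c, τ, hc, hτ⟩ := Fin.exists_perm_coe_eq_append (r := r) hα.injective
  have hcα := (Fin.append_injective_iff.mp (hτ ▸ τ.injective)).2.2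
  have hg : StrictMono (Fin.append (Fin.castAdd m ∘ c) (Fin.natAdd (r + l) ∘ β)) :=
    Fin.strictMono_append ((Fin.strictMono_castAdd m).comp hc)
      ((Fin.strictMono_natAdd _).comp hβ) fun q t => by simp [Fin.lt_def]; omega
  have hgS (q : Fin (r + l)) :
      Fin.append (Fin.castAdd m ∘ c) (Fin.natAdd (r + l) ∘ β) q ∈ S := by
    induction q using Fin.addCases with
    | left q => simpa [hSdef] using Or.inl fun t h => hcα q t h.symm
    | right t => simp [hSdef]
  rw [plucker_eq_det_submatrix Y hS₀ (Fin.strictMono_castAdd m) (by simp [hS₀def]),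
    idY_submatrix_castAdd, det_one, div_one, plucker_eq_det_submatrix Y hS hg hgS,
    det_idY_submatrix_append Y β hτ, Equiv.Perm.sign_eq_of_coe_eq_append hc hα hτ,
    Int.cast_val_neg_one_zpow, Fin.sum_add_val_sub_eq, ← mul_assoc, ← mul_zpow, neg_one_mul,
    neg_neg, _root_.one_zpow, one_mul]
end
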